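/- Let A, b₁, b₂, α, β, γ ∈ ℂ (or ℝ). Suppose the two relations obtained by substituting the Laurent series solutions into the constants of motion hold: (1/9)α² − (21/4)γ + (13/288)α⁴ + (4/3)A³ = b₁ and −144αβ³ + (294/5)α³βA² + (8/9)α⁶ − 33γα⁴ = b₂. Then, after eliminating γ, the parameters α and β satisfy the equation of the genus-four curve 𝒟: 144αβ³ − (294A²/5)α³β + (143/504)α⁸ − (4/21)α⁶ + (44/21)(4A³ − 3b₁)α⁴ + b₂ = 0. -/
import Mathlib


/-- Eliminating γ from the two relations obtained by substituting the Laurent series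
solutions into the constants of motion H₁ = b₁, H₂ = b₂ yields the equation of the
genus-four curve 𝒟 relating α and β. -/
theorem curve_D_equation (A b₁ b₂ α β γ : ℂ)
    (h₁ : (1/9) * α^2 - (21/4) * γ + (13/288) * α^4 + (4/3) * A^3 = b₁)
    (h₂ : -144 * α * β^3 + (294/5) * α^3 * β * A^2 + (8/9) * α^6 - 33 * γ * α^4 = b₂) :
    144 * α * β^3 - (294 * A^2 / 5) * α^3 * β + (143/504) * α^8 - (4/21) * α^6
      + (44/21) * (4 * A^3 - 3 * b₁) * α^4 + b₂ = 0 := by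
  linear_combination (44/7)*α^4*h₁ - h₂
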